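/- (Main theorem) Let G be an edge-capacitated graph, T a set of its vertices, and β, γ type vectors. If the support of γ is a laminar family and the metric D_β dominates D_γ pointwise on pairs of terminals, then Σ_S β_S · cut_G(S) ≥ Σ_S γ_S · cut_G(S). -/

import Mathlib

open Finset
open scoped Classical

noncomputable def crossCap {V : Type*} [Fintype V] (c : V → V → ℝ) (A : Finset V) : ℝ :=
  ∑ u ∈ A, ∑ v ∈ Aᶜ, c u v

noncomputable def cutVal {V : Type*} [Fintype V] (c : V → V → ℝ) (T S : Finset V) : ℝ :=
  Finset.inf' (Finset.univ.filter fun A : Finset V => S ⊆ A ∧ Disjoint (T \ S) A)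
    ⟨S, by simp [Finset.sdiff_disjoint]⟩ (fun A => crossCap c A)

def cutsPair {V : Type*} (S : Finset V) (t t' : V) : Prop :=
  (t ∈ S ∧ t' ∉ S) ∨ (t' ∈ S ∧ t ∉ S)

/-- The collection of proper nonempty subsets of a terminal set `T`. -/
noncomputable def properSubsetsOf {V : Type*} [Fintype V] (T : Finset V) : Finset (Finset V) :=
  Finset.univ.filter fun S : Finset V => S ⊆ T ∧ S.Nonempty ∧ S ≠ T

/-- The metric on the terminals induced by a type vector `β`. -/
noncomputable def Dmet {V : Type*} [Fintype V] (T : Finset V) (β : Finset V → ℝ) (t t' : V) : ℝ :=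
  ∑ S ∈ properSubsetsOf T, β S * (if cutsPair S t t' then 1 else 0)

/-!
The laminar support of `γ` is the edge set of an ℝ-tree, the edge of `S` having length `γ S`, and
`D_γ` is the tree metric between the points where the terminals sit. Minimum cuts `A S` for the
sets `S` give the cut pseudometric `d = Σ_S β_S · |𝟙_{A S}(u) - 𝟙_{A S}(v)|` on all vertices, with
`Σ_{u,v} c(u,v) d(u,v) = 2 Σ_S β_S cut(S)`, and domination says that the terminal embedding is
1-Lipschitz from `d`. Trees are hyperconvex, so this map extends, one vertex at a time, to a
1-Lipschitz map `ρ` of all vertices into the tree. For each `S` the coordinate `ρ(·)_S` vanishes on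
`S` and is at least `γ_S` on `T \ S`, so by the coarea formula
`Σ_{u,v} c(u,v) |ρ(u)_S - ρ(v)_S| ≥ 2 γ_S cut(S)`; summing over `S` and using the Lipschitz bound
gives the theorem.
-/

lemma abs_sub_eq_abs_min_sub_add_abs_max_sub (a b θ : ℝ) :
    |a - b| = |min a θ - min b θ| + |max (a - θ) 0 - max (b - θ) 0| := by
  wlog hab : a ≤ b generalizing a b
  · rw [abs_sub_comm, this b a (le_of_not_ge hab), abs_sub_comm (min a θ),
      abs_sub_comm (max (a - θ) 0)]
  have hsplit : ∀ x, min x θ + max (x - θ) 0 = x := fun x => by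
    rcases le_total x θ with h | h <;> simp [h, sub_nonpos.mpr, sub_nonneg.mpr]
  rw [abs_of_nonpos (sub_nonpos.2 hab), abs_of_nonpos (sub_nonpos.2 (min_le_min_right θ hab)),
    abs_of_nonpos (sub_nonpos.2 (max_le_max_right 0 (sub_le_sub_right hab θ)))]
  linarith [hsplit a, hsplit b]

section Cuts

variable {V : Type*} [Fintype V] (c : V → V → ℝ)

noncomputable def graphTV (h : V → ℝ) : ℝ :=
  ∑ u, ∑ v, c u v * |h u - h v|

lemma graphTV_nonneg (hc : ∀ u v, 0 ≤ c u v) (h : V → ℝ) : 0 ≤ graphTV c h :=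
  sum_nonneg fun u _ => sum_nonneg fun v _ => mul_nonneg (hc u v) (abs_nonneg _)

lemma graphTV_const_mul {a : ℝ} (ha : 0 ≤ a) (h : V → ℝ) :
    graphTV c (fun v => a * h v) = a * graphTV c h := by
  simp only [graphTV, mul_sum, ← mul_sub, abs_mul, abs_of_nonneg ha]
  exact sum_congr rfl fun u _ => sum_congr rfl fun v _ => by ring

lemma graphTV_eq_add_min_max (h : V → ℝ) (θ : ℝ) :
    graphTV c h = graphTV c (fun v => min (h v) θ) + graphTV c (fun v => max (h v - θ) 0) := by
  simp only [graphTV, ← sum_add_distrib, ← mul_add, ← abs_sub_eq_abs_min_sub_add_abs_max_sub]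

lemma crossCap_compl (hsym : ∀ u v, c u v = c v u) (A : Finset V) :
    crossCap c Aᶜ = crossCap c A := by
  rw [crossCap, crossCap, compl_compl, sum_comm]
  exact sum_congr rfl fun v _ => sum_congr rfl fun u _ => hsym u v

lemma graphTV_indicator (hsym : ∀ u v, c u v = c v u) (A : Finset V) :
    graphTV c (fun v => if v ∈ A then 1 else 0) = 2 * crossCap c A := by
  have hrow : ∀ u, ∑ v, c u v * |(if u ∈ A then 1 else 0) - (if v ∈ A then (1 : ℝ) else 0)|
      = if u ∈ A then ∑ v ∈ Aᶜ, c u v else ∑ v ∈ A, c u v := by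
    intro u
    rw [← sum_add_sum_compl A]
    by_cases hu : u ∈ A
    · simp only [hu, if_true]
      rw [sum_eq_zero (s := A) fun v hv => by simp [hv], zero_add]
      exact sum_congr rfl fun v hv => by simp [mem_compl.mp hv]
    · simp only [hu, if_false]
      rw [sum_eq_zero (s := Aᶜ) fun v hv => by simp [mem_compl.mp hv], add_zero]
      exact sum_congr rfl fun v hv => by simp [hv]
  rw [graphTV, sum_congr rfl fun u _ => hrow u, ← sum_add_sum_compl A,
    sum_congr rfl fun u hu => if_pos hu, sum_congr rfl fun u hu => if_neg (mem_compl.mp hu)]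
  have := crossCap_compl c hsym A
  simp only [crossCap, compl_compl] at this ⊢
  linarith

lemma cutVal_le_crossCap {T S A : Finset V} (hSA : S ⊆ A) (hA : Disjoint (T \ S) A) :
    cutVal c T S ≤ crossCap c A :=
  inf'_le _ (mem_filter.mpr ⟨mem_univ A, hSA, hA⟩)

lemma exists_crossCap_eq_cutVal (T S : Finset V) :
    ∃ A, S ⊆ A ∧ Disjoint (T \ S) A ∧ crossCap c A = cutVal c T S := by
  obtain ⟨A, hA, hval⟩ := exists_mem_eq_inf'
    (⟨S, by simp [sdiff_disjoint]⟩ :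
      (univ.filter fun A : Finset V => S ⊆ A ∧ Disjoint (T \ S) A).Nonempty) (crossCap c)
  exact ⟨A, (mem_filter.mp hA).2.1, (mem_filter.mp hA).2.2, hval.symm⟩

end Cuts

section Coarea

variable {V : Type*} [Fintype V] {c : V → V → ℝ}

lemma graphTV_min_eq_mul_indicator {h : V → ℝ} {θ : ℝ} (hθ : 0 ≤ θ) (h0 : ∀ v, 0 ≤ h v)
    (hgap : ∀ v, 0 < h v → θ ≤ h v) :
    graphTV c (fun v => min (h v) θ) =
      θ * graphTV c (fun v => if v ∈ univ.filter (θ ≤ h ·) then 1 else 0) := by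
  rw [← graphTV_const_mul c hθ]
  congr 1
  funext v
  by_cases hv : θ ≤ h v
  · simp [hv]
  · have : h v = 0 := le_antisymm (not_lt.mp fun hpos => hv (hgap v hpos)) (h0 v)
    have hvA : v ∉ univ.filter (θ ≤ h ·) := by simpa using hv
    rw [if_neg hvA, this, min_eq_left hθ, mul_zero]

theorem two_mul_mul_cutVal_le_graphTV (hc : ∀ u v, 0 ≤ c u v) (hsym : ∀ u v, c u v = c v u)
    {T S : Finset V} {κ : ℝ} (hκ : 0 ≤ κ) {h : V → ℝ} (h0 : ∀ v, 0 ≤ h v)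
    (hS : ∀ t ∈ S, h t = 0) (hT : ∀ t ∈ T \ S, κ ≤ h t) :
    2 * (κ * cutVal c T S) ≤ graphTV c h := by
  induction hn : #{x ∈ univ.image h | 0 < x} using Nat.strong_induction_on generalizing h κ with
  | _ n ih =>
  rcases hκ.eq_or_lt with rfl | hκ
  · simpa using graphTV_nonneg c hc h
  -- Split `h` at its least positive value `θ` (capped at `κ`): `min h θ` is `θ` times the
  -- indicator of a cut between `S` and `T \ S`, and `h - θ` has fewer positive values.
  set P := {x ∈ univ.image h | 0 < x}
  set θ := (insert κ P).min' (insert_nonempty κ P)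
  have hθκ : θ ≤ κ := min'_le _ _ (mem_insert_self κ P)
  have hθh : ∀ v, 0 < h v → θ ≤ h v := fun v hv =>
    min'_le _ _ (mem_insert_of_mem (mem_filter.mpr ⟨mem_image_of_mem h (mem_univ v), hv⟩))
  have hθmem : θ ∈ insert κ P := min'_mem _ _
  have hθ : 0 < θ := by
    rcases mem_insert.mp hθmem with hθ | hθ
    · exact hθ ▸ hκ
    · exact (mem_filter.mp hθ).2
  set A := (univ.filter (θ ≤ h ·))ᶜ
  have hcut : cutVal c T S ≤ crossCap c A := by
    refine cutVal_le_crossCap c (fun t ht => ?_) (disjoint_left.mpr fun t ht htA => ?_)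
    · simp [A, hS t ht, hθ]
    · simp only [A, mem_compl, mem_filter, mem_univ, true_and] at htA
      exact htA (hθκ.trans (hT t ht))
  set h' := fun v => max (h v - θ) 0
  have hrest : 2 * ((κ - θ) * cutVal c T S) ≤ graphTV c h' := by
    rcases hθκ.eq_or_lt with hθκ | hθκ
    · simpa [hθκ] using graphTV_nonneg c hc h'
    have hθP : θ ∈ P := (mem_insert.mp hθmem).resolve_left hθκ.ne
    refine ih _ ?_ (sub_nonneg.mpr hθκ.le) (fun v => le_max_right _ _) (fun t ht => ?_)
      (fun t ht => ?_) rfl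
    · have hsub : {x ∈ univ.image h' | 0 < x} ⊆ (P.erase θ).image (· - θ) := by
        intro x hx
        obtain ⟨v, -, rfl⟩ := mem_image.mp (mem_filter.mp hx).1
        have hv : 0 < h v - θ := by simpa [h'] using (mem_filter.mp hx).2
        refine mem_image.mpr ⟨h v, mem_erase.mpr ⟨by linarith, mem_filter.mpr
          ⟨mem_image_of_mem h (mem_univ v), by linarith⟩⟩, by simp [h', hv.le]⟩
      calc #{x ∈ univ.image h' | 0 < x} ≤ #((P.erase θ).image (· - θ)) := card_le_card hsub
        _ ≤ #(P.erase θ) := card_image_le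
        _ < #P := card_erase_lt_of_mem hθP
        _ = n := hn
    · simp [h', hS t ht, hθ.le]
    · exact le_max_of_le_left (sub_le_sub_right (hT t ht) θ)
  calc 2 * (κ * cutVal c T S)
      = θ * (2 * cutVal c T S) + 2 * ((κ - θ) * cutVal c T S) := by ring
    _ ≤ θ * (2 * crossCap c A) + graphTV c h' := by gcongr
    _ = graphTV c h := by
      rw [graphTV_eq_add_min_max c h θ, graphTV_min_eq_mul_indicator hθ.le h0 hθh,
        graphTV_indicator c hsym, crossCap_compl c hsym]

end Coarea

section L1

variable {ι : Type*} (I : Finset ι)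

def l1Dist (x y : ι → ℝ) : ℝ :=
  ∑ i ∈ I, |x i - y i|

lemma l1Dist_comm (x y : ι → ℝ) : l1Dist I x y = l1Dist I y x :=
  sum_congr rfl fun _ _ => abs_sub_comm _ _

lemma l1Dist_self (x : ι → ℝ) : l1Dist I x x = 0 := by
  simp [l1Dist]

lemma l1Dist_nonneg (x y : ι → ℝ) : 0 ≤ l1Dist I x y :=
  sum_nonneg fun _ _ => abs_nonneg _

lemma l1Dist_triangle (x y z : ι → ℝ) : l1Dist I x z ≤ l1Dist I x y + l1Dist I y z := by
  rw [l1Dist, l1Dist, l1Dist, ← sum_add_distrib]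
  exact sum_le_sum fun i _ => abs_sub_le _ _ _

lemma l1Dist_eq_sum_sub_of_le {x y : ι → ℝ} (hxy : ∀ i ∈ I, x i ≤ y i) :
    l1Dist I x y = ∑ i ∈ I, (y i - x i) :=
  sum_congr rfl fun i hi => by rw [abs_sub_comm, abs_of_nonneg (sub_nonneg.mpr (hxy i hi))]

lemma l1Dist_add_l1Dist_of_le {x y z : ι → ℝ} (hxy : ∀ i ∈ I, x i ≤ y i)
    (hyz : ∀ i ∈ I, y i ≤ z i) : l1Dist I x y + l1Dist I y z = l1Dist I x z := by
  rw [l1Dist_eq_sum_sub_of_le I hxy, l1Dist_eq_sum_sub_of_le I hyz,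
    l1Dist_eq_sum_sub_of_le I fun i hi => (hxy i hi).trans (hyz i hi), ← sum_add_distrib]
  exact sum_congr rfl fun _ _ => by ring

lemma l1Dist_eq_l1Dist_sup_add (x y : ι → ℝ) :
    l1Dist I x y = l1Dist I x (x ⊔ y) + l1Dist I (x ⊔ y) y := by
  rw [l1Dist, l1Dist, l1Dist, ← sum_add_distrib]
  refine sum_congr rfl fun i _ => ?_
  simp only [Pi.sup_apply]
  rcases le_total (x i) (y i) with h | h <;> simp [h, abs_sub_comm (x i), abs_of_nonneg, sub_nonneg]

variable {V : Type*} [Fintype V] (c : V → V → ℝ)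

lemma sum_graphTV_eq (f : V → ι → ℝ) :
    ∑ i ∈ I, graphTV c (fun v => f v i) = ∑ u, ∑ v, c u v * l1Dist I (f u) (f v) := by
  simp only [graphTV, l1Dist, mul_sum]
  rw [sum_comm]
  exact sum_congr rfl fun u _ => sum_comm

end L1

lemma min_add_min_max_sub {a b δ : ℝ} (ha : 0 ≤ a) :
    min δ b + min a (max 0 (δ - b)) = min δ (b + a) := by
  simp only [min_def, max_def]
  split_ifs <;> linarith

/-- Pouring `δ` into the chain `C` of containers of sizes `a S`, smallest first, fills `S` with
what is left after the containers below it: `min δ (∑ S ∈ C, a S)` in total. -/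
lemma IsChain.sum_min_max_sub_sum_lt {ι : Type*} [PartialOrder ι] {C : Finset ι}
    (hC : IsChain (· ≤ ·) (C : Set ι)) {a : ι → ℝ} (ha : ∀ S ∈ C, 0 ≤ a S) {δ : ℝ} (hδ : 0 ≤ δ) :
    ∑ S ∈ C, min (a S) (max 0 (δ - ∑ S' ∈ C with S' < S, a S')) = min δ (∑ S ∈ C, a S) := by
  induction C using Finset.strongInduction with
  | H C ih =>
  rcases C.eq_empty_or_nonempty with rfl | hne
  · simp [hδ]
  obtain ⟨M, hM⟩ := exists_maximal hne
  have hlt : ∀ S ∈ C, S ≠ M → S < M := by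
    intro S hS hSM
    rcases hC.total hS hM.prop with h | h
    · exact h.lt_of_ne hSM
    · exact absurd (le_antisymm (hM.le_of_ge hS h) h) hSM
  have hbelowM : C.filter (· < M) = C.erase M := by
    ext S
    simp only [mem_filter, mem_erase]
    exact ⟨fun h => ⟨h.2.ne, h.1⟩, fun h => ⟨h.2, hlt S h.2 h.1⟩⟩
  have hbelow : ∀ S ∈ C.erase M, C.filter (· < S) = (C.erase M).filter (· < S) := by
    intro S hS
    ext S'
    simp only [mem_filter, mem_erase]
    refine ⟨fun h => ⟨⟨?_, h.1⟩, h.2⟩, fun h => ⟨h.1.2, h.2⟩⟩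
    rintro rfl
    exact hM.not_gt (mem_of_mem_erase hS) h.2
  rw [← sum_erase_add C _ hM.prop, sum_congr rfl fun S hS => by rw [hbelow S hS],
    ih _ (erase_ssubset hM.prop) (hC.mono (by simp)) fun S hS => ha S (mem_of_mem_erase hS),
    hbelowM, ← sum_erase_add C a hM.prop]
  exact min_add_min_max_sub (ha M hM.prop)

section LaminarTree

variable {ι : Type*} (I : Finset ι) (w : ι → ℝ)

def depth (g : ι → ℝ) : ℝ :=
  ∑ S ∈ I, (w S - g S)

variable {I w} in
lemma l1Dist_eq_depth_sub_depth {x y : ι → ℝ} (hxy : ∀ S ∈ I, x S ≤ y S) :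
    l1Dist I x y = depth I w x - depth I w y := by
  rw [l1Dist_eq_sum_sub_of_le I hxy, depth, depth, ← sum_sub_distrib]
  exact sum_congr rfl fun _ _ => by ring

variable [PartialOrder ι]

/-- `g` is a point of the ℝ-tree with root `w` whose edges are the sets `S ∈ I`, of lengths `w S`,
smaller sets lying further from the root: the path from the root to `g` runs through the part
`w S - g S` of the edge of `S`. `IsFilling` says that the path enters a smaller set only after
running through the whole edge of a larger one; `IsTreePoint` adds that the edges it meets form a
chain. -/
structure IsFilling (g : ι → ℝ) : Prop where
  nonneg : ∀ S ∈ I, 0 ≤ g S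
  le : ∀ S ∈ I, g S ≤ w S
  eq_of_lt : ∀ S ∈ I, ∀ S' ∈ I, S < S' → 0 < g S' → g S = w S

structure IsTreePoint (g : ι → ℝ) : Prop extends IsFilling I w g where
  isChain : IsChain (· ≤ ·) {S | S ∈ I ∧ g S < w S}

noncomputable def depthBelow (g : ι → ℝ) (S : ι) : ℝ :=
  ∑ S' ∈ I with S' < S, (w S' - g S')

/-- The point at distance `δ` from `g` on its path to the root (or the root if it is nearer),
reached by leaving the smallest sets first. -/
noncomputable def climb (g : ι → ℝ) (δ : ℝ) (S : ι) : ℝ :=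
  min (w S) (g S + max 0 (δ - depthBelow I w g S))

variable {I w}

lemma isTreePoint_root (hw : ∀ S ∈ I, 0 ≤ w S) : IsTreePoint I w w where
  nonneg := hw
  le _ _ := le_rfl
  eq_of_lt _ _ _ _ _ _ := rfl
  isChain := by simp [IsChain]

lemma IsFilling.depth_nonneg {g : ι → ℝ} (hg : IsFilling I w g) : 0 ≤ depth I w g :=
  sum_nonneg fun S hS => sub_nonneg.mpr (hg.le S hS)

lemma IsFilling.sup {g h : ι → ℝ} (hg : IsFilling I w g) (hh : IsFilling I w h) :
    IsFilling I w (g ⊔ h) where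
  nonneg S hS := (hg.nonneg S hS).trans le_sup_left
  le S hS := sup_le (hg.le S hS) (hh.le S hS)
  eq_of_lt S hS S' hS' hSS' hpos := by
    rcases lt_max_iff.mp hpos with hpos | hpos
    · rw [Pi.sup_apply, hg.eq_of_lt S hS S' hS' hSS' hpos, max_eq_left (hh.le S hS)]
    · rw [Pi.sup_apply, hh.eq_of_lt S hS S' hS' hSS' hpos, max_eq_right (hg.le S hS)]

lemma IsFilling.le_or_le {p m : ι → ℝ} (hp : IsFilling I w p) (hm : IsFilling I w m)
    (hchain : IsChain (· ≤ ·) {S | S ∈ I ∧ p S ≠ m S}) :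
    (∀ S ∈ I, p S ≤ m S) ∨ ∀ S ∈ I, m S ≤ p S := by
  have key : ∀ {x y : ι → ℝ}, IsFilling I w x → IsFilling I w y → ∀ S ∈ I, ∀ S' ∈ I,
      y S < x S → x S' < y S' → ¬ S ≤ S' := by
    intro x y hx hy S hS S' hS' hSx hS'y hSS'
    rcases hSS'.lt_or_eq with hSS' | rfl
    · have := hy.eq_of_lt S hS S' hS' hSS' ((hx.nonneg S' hS').trans_lt hS'y)
      linarith [hx.le S hS]
    · exact lt_asymm hSx hS'y
  by_contra h
  push Not at h
  obtain ⟨⟨S, hS, hSlt⟩, ⟨S', hS', hS'lt⟩⟩ := h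
  rcases hchain.total ⟨hS, hSlt.ne'⟩ ⟨hS', hS'lt.ne⟩ with hSS' | hS'S
  · exact key hp hm S hS S' hS' hSlt hS'lt hSS'
  · exact key hm hp S' hS' S hS hS'lt hSlt hS'S

section Climb

variable {g : ι → ℝ} {δ : ℝ}

lemma climb_le (S : ι) : climb I w g δ S ≤ w S :=
  min_le_left _ _

lemma climb_eq_of_eq {S : ι} (h : g S = w S) : climb I w g δ S = w S :=
  min_eq_left (h ▸ le_add_of_nonneg_right (le_max_left _ _))

lemma IsFilling.le_climb (hg : IsFilling I w g) {S : ι} (hS : S ∈ I) : g S ≤ climb I w g δ S :=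
  le_min (hg.le S hS) (le_add_of_nonneg_right (le_max_left _ _))

lemma IsFilling.depthBelow_add_le (hg : IsFilling I w g) {S S' : ι} (hS : S ∈ I)
    (hSS' : S < S') : depthBelow I w g S + (w S - g S) ≤ depthBelow I w g S' := by
  have hsub : insert S (I.filter (· < S)) ⊆ I.filter (· < S') := by
    intro x hx
    rcases mem_insert.mp hx with rfl | hx
    · exact mem_filter.mpr ⟨hS, hSS'⟩
    · exact mem_filter.mpr ⟨(mem_filter.mp hx).1, (mem_filter.mp hx).2.trans hSS'⟩
  have := sum_le_sum_of_subset_of_nonneg hsub fun x hx _ =>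
    sub_nonneg.mpr (hg.le x (mem_filter.mp hx).1)
  rw [sum_insert (by simp)] at this
  rw [depthBelow, depthBelow]
  linarith

lemma isFilling_climb (hg : IsFilling I w g) : IsFilling I w (climb I w g δ) where
  nonneg S hS := (hg.nonneg S hS).trans (hg.le_climb hS)
  le S _ := climb_le S
  eq_of_lt S hS S' hS' hSS' hpos := by
    by_cases hg' : 0 < g S'
    · exact climb_eq_of_eq (hg.eq_of_lt S hS S' hS' hSS' hg')
    have hg0 : g S' = 0 := le_antisymm (not_lt.mp hg') (hg.nonneg S' hS')
    have hδ : 0 < δ - depthBelow I w g S' := by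
      have := (lt_min_iff.mp hpos).2
      rw [hg0, zero_add] at this
      exact (lt_max_iff.mp this).resolve_left (lt_irrefl 0)
    exact min_eq_left (by
      linarith [le_max_right 0 (δ - depthBelow I w g S), hg.depthBelow_add_le hS hSS'])

lemma isTreePoint_climb (hg : IsTreePoint I w g) : IsTreePoint I w (climb I w g δ) where
  toIsFilling := isFilling_climb hg.toIsFilling
  isChain := hg.isChain.mono fun S (hS : S ∈ I ∧ climb I w g δ S < w S) =>
    show S ∈ I ∧ g S < w S from
      ⟨hS.1, (hg.le S hS.1).lt_of_ne fun h => hS.2.ne (climb_eq_of_eq h)⟩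

lemma IsTreePoint.sum_climb_sub (hg : IsTreePoint I w g) (hδ : 0 ≤ δ) :
    ∑ S ∈ I, (climb I w g δ S - g S) = min δ (depth I w g) := by
  set C := I.filter fun S => g S < w S
  have hC : C ⊆ I := filter_subset _ _
  have hfull : ∀ S ∈ I, S ∉ C → g S = w S := fun S hS hSC =>
    le_antisymm (hg.le S hS) (not_lt.mp fun h => hSC (mem_filter.mpr ⟨hS, h⟩))
  have hdepth : depth I w g = ∑ S ∈ C, (w S - g S) :=
    (sum_subset hC fun S hS hSC => by rw [hfull S hS hSC, sub_self]).symm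
  have hbelow : ∀ S, depthBelow I w g S = ∑ S' ∈ C with S' < S, (w S' - g S') := fun S =>
    (sum_subset (filter_subset_filter _ hC) fun S' hS' hS'C => by
      rw [hfull S' (mem_filter.mp hS').1 fun h => hS'C (mem_filter.mpr ⟨h, (mem_filter.mp hS').2⟩),
        sub_self]).symm
  have hterm : ∀ S ∈ C, climb I w g δ S - g S =
      min (w S - g S) (max 0 (δ - ∑ S' ∈ C with S' < S, (w S' - g S'))) := fun S _ => by
    rw [climb, ← hbelow, ← min_sub_sub_right, add_sub_cancel_left]
  rw [← sum_subset hC fun S hS hSC => by rw [climb_eq_of_eq (hfull S hS hSC), hfull S hS hSC,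
    sub_self], sum_congr rfl hterm, hdepth]
  exact IsChain.sum_min_max_sub_sum_lt (hg.isChain.mono fun S hS => mem_filter.mp hS)
    (fun S hS => sub_nonneg.mpr (mem_filter.mp hS).2.le) hδ

lemma IsTreePoint.l1Dist_climb (hg : IsTreePoint I w g) (hδ : 0 ≤ δ) :
    l1Dist I g (climb I w g δ) = min δ (depth I w g) := by
  rw [l1Dist_eq_sum_sub_of_le I fun S hS => hg.le_climb hS, hg.sum_climb_sub hδ]

lemma IsTreePoint.depth_climb (hg : IsTreePoint I w g) (hδ : 0 ≤ δ) :
    depth I w (climb I w g δ) = depth I w g - min δ (depth I w g) := by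
  have := l1Dist_eq_depth_sub_depth (w := w) fun S hS => hg.le_climb (δ := δ) hS
  rw [hg.l1Dist_climb hδ] at this
  linarith

lemma IsTreePoint.climb_eq_of_depth_le (hg : IsTreePoint I w g) (h : depth I w g ≤ δ) {S : ι}
    (hS : S ∈ I) : climb I w g δ S = w S := by
  have hzero : depth I w (climb I w g δ) = 0 := by
    rw [hg.depth_climb (hg.depth_nonneg.trans h), min_eq_right h, sub_self]
  have := (sum_eq_zero_iff_of_nonneg fun S _ => sub_nonneg.mpr (climb_le S)).mp hzero S hS
  linarith

lemma IsTreePoint.l1Dist_climb_le {q : ι → ℝ} (hg : IsTreePoint I w g) (hq : IsTreePoint I w q)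
    (hδ : 0 ≤ δ) :
    l1Dist I (climb I w g δ) q ≤ max (l1Dist I g q - δ) (depth I w q - depth I w g + δ) := by
  -- Unless it passes above `q`, the climbing point runs along the geodesic from `g` via `g ⊔ q`.
  by_cases hle : ∀ S ∈ I, q S ≤ climb I w g δ S
  · rw [l1Dist_comm, l1Dist_eq_depth_sub_depth hle, hg.depth_climb hδ]
    exact le_max_of_le_right (by linarith [min_le_left δ (depth I w g)])
  have hδg : δ ≤ depth I w g := le_of_not_ge fun h =>
    hle fun S hS => (hq.le S hS).trans_eq (hg.climb_eq_of_depth_le h hS).symm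
  have hchain : IsChain (· ≤ ·) {S | S ∈ I ∧ climb I w g δ S ≠ (g ⊔ q) S} :=
    hg.isChain.mono fun S (hS : S ∈ I ∧ _) => show S ∈ I ∧ _ from
      ⟨hS.1, (hg.le S hS.1).lt_of_ne fun h => hS.2 (by
        rw [climb_eq_of_eq h, Pi.sup_apply, h, max_eq_left (hq.le S hS.1)])⟩
  have hsup : ∀ S ∈ I, climb I w g δ S ≤ (g ⊔ q) S :=
    ((isFilling_climb hg.toIsFilling).le_or_le (hg.sup hq.toIsFilling) hchain).resolve_right
      fun h => hle fun S hS => le_sup_right.trans (h S hS)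
  refine le_max_of_le_left ?_
  calc l1Dist I (climb I w g δ) q
      ≤ l1Dist I (climb I w g δ) (g ⊔ q) + l1Dist I (g ⊔ q) q := l1Dist_triangle I _ _ _
    _ = l1Dist I g q - δ := by
      linarith [l1Dist_add_l1Dist_of_le I (fun S hS => hg.le_climb (δ := δ) hS) hsup,
        l1Dist_eq_l1Dist_sup_add I g q, hg.l1Dist_climb hδ, min_eq_left hδg]

end Climb

end LaminarTree

theorem exists_isTreePoint_l1Dist_le {ι : Type*} [PartialOrder ι] {I : Finset ι} {w : ι → ℝ}
    (hw : ∀ S ∈ I, 0 ≤ w S) {α : Type*} (A : Finset α) (q : α → ι → ℝ)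
    (hq : ∀ x ∈ A, IsTreePoint I w (q x)) (r : α → ℝ) (hr : ∀ x ∈ A, 0 ≤ r x)
    (hqr : ∀ x ∈ A, ∀ y ∈ A, l1Dist I (q x) (q y) ≤ r x + r y) :
    ∃ p, IsTreePoint I w p ∧ ∀ x ∈ A, l1Dist I p (q x) ≤ r x := by
  rcases A.eq_empty_or_nonempty with rfl | hA
  · exact ⟨w, isTreePoint_root hw, by simp⟩
  -- Climb from the point `q x₀` that lies deepest relative to its radius.
  obtain ⟨x₀, hx₀, hmax⟩ := A.exists_max_image (fun x => depth I w (q x) - r x) hA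
  refine ⟨climb I w (q x₀) (r x₀), isTreePoint_climb (hq x₀ hx₀), fun y hy => ?_⟩
  refine ((hq x₀ hx₀).l1Dist_climb_le (hq y hy) (hr x₀ hx₀)).trans (max_le ?_ ?_)
  · linarith [hqr x₀ hx₀ y hy]
  · linarith [hmax y hy]

theorem exists_extension_of_exists_point {α β : Type*} [Fintype α] [DecidableEq α]
    (P : β → Prop) (e : β → β → ℝ) (d : α → α → ℝ) (he : ∀ p q, e p q = e q p)
    (he₀ : ∀ p, e p p = 0) (hd : ∀ x y, d x y = d y x) (hd₀ : ∀ x, 0 ≤ d x x)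
    (hext : ∀ (A : Finset α) (f : α → β), (∀ x ∈ A, P (f x)) →
      (∀ x ∈ A, ∀ y ∈ A, e (f x) (f y) ≤ d x y) → ∀ a, ∃ p, P p ∧ ∀ x ∈ A, e p (f x) ≤ d a x)
    (T : Finset α) (f₀ : α → β) (hP : ∀ t ∈ T, P (f₀ t))
    (hf₀ : ∀ t ∈ T, ∀ t' ∈ T, e (f₀ t) (f₀ t') ≤ d t t') :
    ∃ f : α → β, (∀ t ∈ T, f t = f₀ t) ∧ (∀ x, P (f x)) ∧ ∀ x y, e (f x) (f y) ≤ d x y := by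
  suffices ∀ D ⊆ Tᶜ, ∃ f : α → β, (∀ t ∈ T, f t = f₀ t) ∧ (∀ x ∈ T ∪ D, P (f x)) ∧
      ∀ x ∈ T ∪ D, ∀ y ∈ T ∪ D, e (f x) (f y) ≤ d x y by
    obtain ⟨f, hfT, hfP, hf⟩ := this Tᶜ subset_rfl
    rw [union_compl] at hfP hf
    exact ⟨f, hfT, fun x => hfP x (mem_univ x), fun x y => hf x (mem_univ x) y (mem_univ y)⟩
  intro D hD
  induction D using Finset.induction_on with
  | empty => exact ⟨f₀, fun _ _ => rfl, by simpa using hP, by simpa using hf₀⟩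
  | insert a D haD ih =>
    obtain ⟨f, hfT, hfP, hf⟩ := ih ((subset_insert a D).trans hD)
    have haT : a ∉ T ∪ D := by simp [haD, mem_compl.mp (hD (mem_insert_self a D))]
    obtain ⟨p, hpP, hp⟩ := hext (T ∪ D) f hfP hf a
    have hupd : ∀ x ∈ T ∪ D, Function.update f a p x = f x := fun x hx =>
      Function.update_of_ne (ne_of_mem_of_not_mem hx haT) _ _
    refine ⟨Function.update f a p, fun t ht => (hupd t (mem_union_left D ht)).trans (hfT t ht),
      ?_, ?_⟩
    · rw [union_insert, forall_mem_insert, Function.update_self]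
      exact ⟨hpP, fun x hx => (hupd x hx).symm ▸ hfP x hx⟩
    · rw [union_insert]
      simp only [forall_mem_insert, Function.update_self]
      refine ⟨⟨(he₀ p).trans_le (hd₀ a), fun y hy => ?_⟩, fun x hx => ⟨?_, fun y hy => ?_⟩⟩
      · rw [hupd y hy]; exact hp y hy
      · rw [hupd x hx, he, hd]; exact hp x hx
      · rw [hupd x hx, hupd y hy]; exact hf x hx y hy

theorem exists_isTreePoint_extension {ι : Type*} [PartialOrder ι] {I : Finset ι} {w : ι → ℝ}
    (hw : ∀ S ∈ I, 0 ≤ w S) {α : Type*} [Fintype α] [DecidableEq α] (d : α → α → ℝ)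
    (hd₀ : ∀ x y, 0 ≤ d x y) (hd : ∀ x y, d x y = d y x)
    (hd_triangle : ∀ x y z, d x z ≤ d x y + d y z) (T : Finset α) (q₀ : α → ι → ℝ)
    (hq₀ : ∀ t ∈ T, IsTreePoint I w (q₀ t))
    (hlip : ∀ t ∈ T, ∀ t' ∈ T, l1Dist I (q₀ t) (q₀ t') ≤ d t t') :
    ∃ q : α → ι → ℝ, (∀ t ∈ T, q t = q₀ t) ∧ (∀ x, IsTreePoint I w (q x)) ∧
      ∀ x y, l1Dist I (q x) (q y) ≤ d x y :=
  exists_extension_of_exists_point _ (l1Dist I) d (l1Dist_comm I) (l1Dist_self I) hd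
    (fun x => hd₀ x x)
    (fun A f hf hlip a => exists_isTreePoint_l1Dist_le hw A f hf (d a) (fun x _ => hd₀ a x)
      fun x hx y hy => (hlip x hx y hy).trans (by linarith [hd_triangle x a y, hd a x]))
    T q₀ hq₀ hlip

section Terminals

variable {V : Type*}

lemma isTreePoint_ite_mem (I : Finset (Finset V)) {γ : Finset V → ℝ} (hγ0 : ∀ S, 0 ≤ γ S)
    (hlaminar : ∀ S S', γ S ≠ 0 → γ S' ≠ 0 → S ⊆ S' ∨ S' ⊆ S ∨ Disjoint S S') (t : V) :
    IsTreePoint I γ (fun S => if t ∈ S then 0 else γ S) where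
  nonneg S _ := by split_ifs <;> simp [hγ0 S]
  le S _ := by split_ifs <;> simp [hγ0 S]
  eq_of_lt S _ S' _ hSS' hpos := by
    have ht : t ∉ S' := fun ht => by simp [ht] at hpos
    have hS : t ∉ S := fun h => ht (hSS'.subset h)
    simp [hS]
  isChain S hS S' hS' _ := by
    have key : ∀ {S}, S ∈ I ∧ (if t ∈ S then 0 else γ S) < γ S → t ∈ S ∧ γ S ≠ 0 := by
      intro S hS
      by_cases ht : t ∈ S
      · simp only [ht, if_true] at hS
        exact ⟨ht, hS.2.ne'⟩
      · simp [ht] at hS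
    obtain ⟨ht, hγ⟩ := key hS
    obtain ⟨ht', hγ'⟩ := key hS'
    rcases hlaminar S S' hγ hγ' with h | h | h
    · exact Or.inl h
    · exact Or.inr h
    · exact absurd ht' (disjoint_left.mp h ht)

variable [Fintype V] {T : Finset V}

lemma l1Dist_ite_mem_eq_Dmet {γ : Finset V → ℝ} (hγ0 : ∀ S, 0 ≤ γ S) (t t' : V) :
    l1Dist (properSubsetsOf T) (fun S => if t ∈ S then 0 else γ S)
      (fun S => if t' ∈ S then 0 else γ S) = Dmet T γ t t' :=
  sum_congr rfl fun S _ => by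
    by_cases ht : t ∈ S <;> by_cases ht' : t' ∈ S <;> simp [cutsPair, ht, ht', abs_of_nonneg, hγ0 S]

lemma Dmet_eq_l1Dist_indicator {β : Finset V → ℝ} (hβ0 : ∀ S, 0 ≤ β S) {A : Finset V → Finset V}
    (hSA : ∀ S, S ⊆ A S) (hA : ∀ S, Disjoint (T \ S) (A S)) {t t' : V} (ht : t ∈ T)
    (ht' : t' ∈ T) :
    Dmet T β t t' = l1Dist (properSubsetsOf T) (fun S => β S * if t ∈ A S then 1 else 0)
      (fun S => β S * if t' ∈ A S then 1 else 0) := by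
  have hmem : ∀ S, ∀ x ∈ T, x ∈ A S ↔ x ∈ S := fun S x hx =>
    ⟨fun hxA => by_contra fun hxS => disjoint_left.mp (hA S) (mem_sdiff.mpr ⟨hx, hxS⟩) hxA,
      fun hxS => hSA S hxS⟩
  refine sum_congr rfl fun S _ => ?_
  simp only [hmem S t ht, hmem S t' ht']
  by_cases hS : t ∈ S <;> by_cases hS' : t' ∈ S <;> simp [cutsPair, hS, hS', abs_of_nonneg, hβ0 S]

variable {c : V → V → ℝ}

lemma two_mul_sum_mul_cutVal_le_sum_mul_l1Dist (hc : ∀ u v, 0 ≤ c u v)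
    (hsym : ∀ u v, c u v = c v u) {γ : Finset V → ℝ} (hγ0 : ∀ S, 0 ≤ γ S) {ρ : V → Finset V → ℝ}
    (hρ0 : ∀ v, ∀ S ∈ properSubsetsOf T, 0 ≤ ρ v S)
    (hρT : ∀ t ∈ T, ρ t = fun S => if t ∈ S then 0 else γ S) :
    2 * ∑ S ∈ properSubsetsOf T, γ S * cutVal c T S ≤
      ∑ u, ∑ v, c u v * l1Dist (properSubsetsOf T) (ρ u) (ρ v) := by
  rw [← sum_graphTV_eq, mul_sum]
  refine sum_le_sum fun S hS => two_mul_mul_cutVal_le_graphTV hc hsym (hγ0 S)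
    (fun v => hρ0 v S hS) (fun t ht => ?_) fun t ht => ?_
  · simp [hρT t ((mem_filter.mp hS).2.1 ht), ht]
  · simp [hρT t (mem_sdiff.mp ht).1, (mem_sdiff.mp ht).2]

lemma sum_mul_l1Dist_indicator (hsym : ∀ u v, c u v = c v u) {β : Finset V → ℝ}
    (hβ0 : ∀ S, 0 ≤ β S) {A : Finset V → Finset V} (hcut : ∀ S, crossCap c (A S) = cutVal c T S) :
    ∑ u, ∑ v, c u v * l1Dist (properSubsetsOf T) (fun S => β S * if u ∈ A S then 1 else 0)
      (fun S => β S * if v ∈ A S then 1 else 0) =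
      2 * ∑ S ∈ properSubsetsOf T, β S * cutVal c T S := by
  rw [← sum_graphTV_eq, mul_sum]
  refine sum_congr rfl fun S _ => ?_
  rw [graphTV_const_mul c (hβ0 S), graphTV_indicator c hsym, hcut]
  ring

end Terminals

theorem laminar_cut_inequality_general {V : Type*} [Fintype V] (c : V → V → ℝ)
    (hc : ∀ u v, 0 ≤ c u v) (hsym : ∀ u v, c u v = c v u) (T : Finset V)
    (β γ : Finset V → ℝ)
    (hβ0 : ∀ S, 0 ≤ β S) (hγ0 : ∀ S, 0 ≤ γ S)
    (hlaminar : ∀ S S', γ S ≠ 0 → γ S' ≠ 0 → S ⊆ S' ∨ S' ⊆ S ∨ Disjoint S S')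
    (hdom : ∀ t ∈ T, ∀ t' ∈ T, Dmet T γ t t' ≤ Dmet T β t t') :
    ∑ S ∈ properSubsetsOf T, γ S * cutVal c T S ≤
      ∑ S ∈ properSubsetsOf T, β S * cutVal c T S := by
  set I := properSubsetsOf T
  choose A hSA hA hcut using exists_crossCap_eq_cutVal c T
  set φ : V → Finset V → ℝ := fun v S => β S * if v ∈ A S then 1 else 0
  obtain ⟨ρ, hρT, hρ, hρφ⟩ := exists_isTreePoint_extension (I := I) (fun S _ => hγ0 S)
    (fun u v => l1Dist I (φ u) (φ v)) (fun u v => l1Dist_nonneg I _ _)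
    (fun u v => l1Dist_comm I _ _) (fun u v x => l1Dist_triangle I _ _ _) T
    (fun t S => if t ∈ S then 0 else γ S) (fun t _ => isTreePoint_ite_mem I hγ0 hlaminar t)
    fun t ht t' ht' => by
      rw [l1Dist_ite_mem_eq_Dmet hγ0, ← Dmet_eq_l1Dist_indicator hβ0 hSA hA ht ht']
      exact hdom t ht t' ht'
  have := calc 2 * ∑ S ∈ I, γ S * cutVal c T S
      ≤ ∑ u, ∑ v, c u v * l1Dist I (ρ u) (ρ v) :=
        two_mul_sum_mul_cutVal_le_sum_mul_l1Dist hc hsym hγ0 (fun v => (hρ v).nonneg) hρT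
    _ ≤ ∑ u, ∑ v, c u v * l1Dist I (φ u) (φ v) := by
      gcongr with u _ v _
      exacts [hc u v, hρφ u v]
    _ = 2 * ∑ S ∈ I, β S * cutVal c T S := sum_mul_l1Dist_indicator hsym hβ0 hcut
  linarith

/-- Main theorem: if `supp γ` is a laminar family and `D_β` dominates `D_γ` on the
terminals, then `Σ_S β_S · cut_G(S) ≥ Σ_S γ_S · cut_G(S)`. -/
theorem laminar_cut_inequality {V : Type*} [Fintype V] (c : V → V → ℝ)
    (hc : ∀ u v, 0 ≤ c u v) (hsym : ∀ u v, c u v = c v u) (T : Finset V)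
    (β γ : Finset V → ℝ)
    (hβ0 : ∀ S, 0 ≤ β S) (hγ0 : ∀ S, 0 ≤ γ S)
    (hβsupp : ∀ S, β S ≠ 0 → S ⊆ T ∧ S.Nonempty ∧ S ≠ T)
    (hγsupp : ∀ S, γ S ≠ 0 → S ⊆ T ∧ S.Nonempty ∧ S ≠ T)
    (hlaminar : ∀ S S', γ S ≠ 0 → γ S' ≠ 0 → S ⊆ S' ∨ S' ⊆ S ∨ Disjoint S S')
    (hdom : ∀ t ∈ T, ∀ t' ∈ T, Dmet T γ t t' ≤ Dmet T β t t') :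
    ∑ S ∈ properSubsetsOf T, γ S * cutVal c T S ≤
      ∑ S ∈ properSubsetsOf T, β S * cutVal c T S :=
  laminar_cut_inequality_general c hc hsym T β γ hβ0 hγ0 hlaminar hdom
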